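/- Let Ω ⊆ ℝⁿ be a nonempty open set and F : Ω → ℝ a C^∞ function whose Hessian D²F(x) is nondegenerate at every x ∈ Ω. For x ∈ Ω define the bilinear map K_x on ℝⁿ by D²F(x)(K_x(u,v), w) = -(1/2) D³F(x)(u,v,w) for all w. If the map x ↦ K_x is constant on Ω, then the (common) multiplication K is associative: K(K(u,v),w) = K(u,K(v,w)) for all u,v,w ∈ ℝⁿ. -/

import Mathlib

/-- Second iterated (Fréchet) derivative of `F` within `Ω` at `x`, as a bilinear form. -/
noncomputable def D2 {n : ℕ} (F : EuclideanSpace ℝ (Fin n) → ℝ)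
    (Ω : Set (EuclideanSpace ℝ (Fin n))) (x u v : EuclideanSpace ℝ (Fin n)) : ℝ :=
  iteratedFDerivWithin ℝ 2 F Ω x ![u, v]

/-- Third iterated (Fréchet) derivative of `F` within `Ω` at `x`, as a trilinear form. -/
noncomputable def D3 {n : ℕ} (F : EuclideanSpace ℝ (Fin n) → ℝ)
    (Ω : Set (EuclideanSpace ℝ (Fin n))) (x u v w : EuclideanSpace ℝ (Fin n)) : ℝ :=
  iteratedFDerivWithin ℝ 3 F Ω x ![u, v, w]

section Aux

variable {n : ℕ}

/-- Differentiating within an open set an identity between evaluated iterated derivatives. -/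
lemma aux_deriv {Ω : Set (EuclideanSpace ℝ (Fin n))} (hΩ : IsOpen Ω)
    {F : EuclideanSpace ℝ (Fin n) → ℝ} (hF : ContDiffOn ℝ (⊤ : ℕ∞) F Ω)
    {k l : ℕ} (c : ℝ) (m₁ : Fin k → EuclideanSpace ℝ (Fin n))
    (m₂ : Fin l → EuclideanSpace ℝ (Fin n))
    (h : ∀ y ∈ Ω, iteratedFDerivWithin ℝ k F Ω y m₁ = c * iteratedFDerivWithin ℝ l F Ω y m₂)
    {x : EuclideanSpace ℝ (Fin n)} (hx : x ∈ Ω) (z : EuclideanSpace ℝ (Fin n)) :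
    iteratedFDerivWithin ℝ (k+1) F Ω x (Fin.cons z m₁)
      = c * iteratedFDerivWithin ℝ (l+1) F Ω x (Fin.cons z m₂) := by
  have hud : UniqueDiffOn ℝ Ω := hΩ.uniqueDiffOn
  have hd1 : DifferentiableWithinAt ℝ (iteratedFDerivWithin ℝ k F Ω) Ω x :=
    hF.differentiableOn_iteratedFDerivWithin (by exact_mod_cast ENat.coe_lt_top k) hud x hx
  have hd2 : DifferentiableWithinAt ℝ (iteratedFDerivWithin ℝ l F Ω) Ω x :=
    hF.differentiableOn_iteratedFDerivWithin (by exact_mod_cast ENat.coe_lt_top l) hud x hx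
  have H1 : HasFDerivWithinAt (fun y => iteratedFDerivWithin ℝ k F Ω y m₁)
      ((ContinuousMultilinearMap.apply ℝ (fun _ : Fin k => EuclideanSpace ℝ (Fin n)) ℝ m₁).comp
        (fderivWithin ℝ (iteratedFDerivWithin ℝ k F Ω) Ω x)) Ω x :=
    (ContinuousMultilinearMap.apply ℝ _ ℝ m₁).hasFDerivAt.comp_hasFDerivWithinAt x
      hd1.hasFDerivWithinAt
  have H2 : HasFDerivWithinAt (fun y => iteratedFDerivWithin ℝ l F Ω y m₂)
      ((ContinuousMultilinearMap.apply ℝ (fun _ : Fin l => EuclideanSpace ℝ (Fin n)) ℝ m₂).comp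
        (fderivWithin ℝ (iteratedFDerivWithin ℝ l F Ω) Ω x)) Ω x :=
    (ContinuousMultilinearMap.apply ℝ _ ℝ m₂).hasFDerivAt.comp_hasFDerivWithinAt x
      hd2.hasFDerivWithinAt
  have H2' := H2.const_mul c
  have H1' : HasFDerivWithinAt (fun y => iteratedFDerivWithin ℝ k F Ω y m₁)
      (c • ((ContinuousMultilinearMap.apply ℝ (fun _ : Fin l => EuclideanSpace ℝ (Fin n)) ℝ m₂).comp
        (fderivWithin ℝ (iteratedFDerivWithin ℝ l F Ω) Ω x))) Ω x :=
    H2'.congr (fun y hy => h y hy) (h x hx)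
  have heq := (hud x hx).eq H1 H1'
  have hz := congrArg (fun (L : EuclideanSpace ℝ (Fin n) →L[ℝ] ℝ) => L z) heq
  simp only [ContinuousLinearMap.coe_comp', Function.comp_apply,
    ContinuousMultilinearMap.apply_apply, ContinuousLinearMap.smul_apply, smul_eq_mul] at hz
  rw [iteratedFDerivWithin_succ_apply_left, iteratedFDerivWithin_succ_apply_left]
  simpa [Fin.tail_cons] using hz

/-- Symmetry of the second derivative on an open set. -/
lemma aux_sym2 {Ω : Set (EuclideanSpace ℝ (Fin n))} (hΩ : IsOpen Ω)
    {F : EuclideanSpace ℝ (Fin n) → ℝ} (hF : ContDiffOn ℝ (⊤ : ℕ∞) F Ω)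
    {x : EuclideanSpace ℝ (Fin n)} (hx : x ∈ Ω) (a b : EuclideanSpace ℝ (Fin n)) :
    D2 F Ω x a b = D2 F Ω x b a := by
  have hud : UniqueDiffOn ℝ Ω := hΩ.uniqueDiffOn
  have hsym := (hF x hx).isSymmSndFDerivWithinAt (by rw [minSmoothness_of_isRCLikeNormedField]; exact WithTop.coe_le_coe.mpr le_top) hud
    (by rw [hΩ.interior_eq]; exact subset_closure hx) hx
  unfold D2
  rw [iteratedFDerivWithin_two_apply F hud hx, iteratedFDerivWithin_two_apply F hud hx]
  simpa using hsym.eq a b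

/-- Swapping the first two arguments of the third derivative. -/
lemma aux_sym3_01 {Ω : Set (EuclideanSpace ℝ (Fin n))} (hΩ : IsOpen Ω)
    {F : EuclideanSpace ℝ (Fin n) → ℝ} (hF : ContDiffOn ℝ (⊤ : ℕ∞) F Ω)
    {x : EuclideanSpace ℝ (Fin n)} (hx : x ∈ Ω) (u v w : EuclideanSpace ℝ (Fin n)) :
    D3 F Ω x u v w = D3 F Ω x v u w := by
  have hud : UniqueDiffOn ℝ Ω := hΩ.uniqueDiffOn
  have hf₁ : ContDiffOn ℝ 2 (fderivWithin ℝ F Ω) Ω := hF.fderivWithin hud (WithTop.coe_le_coe.mpr le_top)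
  have hsym := (hf₁ x hx).isSymmSndFDerivWithinAt (by simp) hud
    (by rw [hΩ.interior_eq]; exact subset_closure hx) hx
  have key : ∀ a b c : EuclideanSpace ℝ (Fin n), D3 F Ω x a b c =
      fderivWithin ℝ (fderivWithin ℝ (fderivWithin ℝ F Ω) Ω) Ω x a b c := by
    intro a b c
    unfold D3
    rw [iteratedFDerivWithin_succ_apply_right hud hx (f := F) (m := ![a,b,c])]
    have h1 : Fin.init ![a, b, c] = ![a, b] := by
      funext i; fin_cases i <;> rfl
    have h2 : ![a, b, c] (Fin.last 2) = c := rfl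
    rw [h1, h2, iteratedFDerivWithin_two_apply _ hud hx]
    simp
  rw [key u v w, key v u w, DFunLike.congr_fun (hsym.eq u v) w]

/-- Swapping the last two arguments of the third derivative. -/
lemma aux_sym3_12 {Ω : Set (EuclideanSpace ℝ (Fin n))} (hΩ : IsOpen Ω)
    {F : EuclideanSpace ℝ (Fin n) → ℝ} (hF : ContDiffOn ℝ (⊤ : ℕ∞) F Ω)
    {x : EuclideanSpace ℝ (Fin n)} (hx : x ∈ Ω) (u v w : EuclideanSpace ℝ (Fin n)) :
    D3 F Ω x u v w = D3 F Ω x u w v := by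
  have h : ∀ y ∈ Ω, iteratedFDerivWithin ℝ 2 F Ω y ![v, w]
      = 1 * iteratedFDerivWithin ℝ 2 F Ω y ![w, v] := by
    intro y hy; rw [one_mul]; exact aux_sym2 hΩ hF hy v w
  have := aux_deriv hΩ hF (1:ℝ) ![v, w] ![w, v] h hx u
  rw [one_mul] at this
  exact this

/-- Full symmetry of the third derivative (as permutation identities we need). -/
lemma aux_sym3_rot {Ω : Set (EuclideanSpace ℝ (Fin n))} (hΩ : IsOpen Ω)
    {F : EuclideanSpace ℝ (Fin n) → ℝ} (hF : ContDiffOn ℝ (⊤ : ℕ∞) F Ω)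
    {x : EuclideanSpace ℝ (Fin n)} (hx : x ∈ Ω) (u v w : EuclideanSpace ℝ (Fin n)) :
    D3 F Ω x u v w = D3 F Ω x v w u := by
  rw [aux_sym3_01 hΩ hF hx, aux_sym3_12 hΩ hF hx]

end Aux

/-- let `Ω ⊆ ℝⁿ` be a nonempty open set and `F` a smooth function on `Ω` with
everywhere nondegenerate Hessian, and let `K_x` be the bilinear map determined by
`D²F(x)(K_x(u,v),w) = -(1/2) D³F(x)(u,v,w)`. If `x ↦ K_x` is constant on `Ω`, then the
common multiplication `K` is associative: `K(K(u,v),w) = K(u,K(v,w))`. -/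
theorem stmt_16 {n : ℕ} (Ω : Set (EuclideanSpace ℝ (Fin n))) (hΩ : IsOpen Ω)
    (hne : Ω.Nonempty)
    (F : EuclideanSpace ℝ (Fin n) → ℝ) (hF : ContDiffOn ℝ (⊤ : ℕ∞) F Ω)
    (hnd : ∀ x ∈ Ω, ∀ u, (∀ v, D2 F Ω x u v = 0) → u = 0)
    (K : EuclideanSpace ℝ (Fin n) → EuclideanSpace ℝ (Fin n) → EuclideanSpace ℝ (Fin n) →
      EuclideanSpace ℝ (Fin n))
    (hK : ∀ x ∈ Ω, ∀ u v w, D2 F Ω x (K x u v) w = -(1/2) * D3 F Ω x u v w)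
    (hconst : ∀ x ∈ Ω, ∀ x' ∈ Ω, K x = K x') :
    ∀ x ∈ Ω, ∀ u v w, K x (K x u v) w = K x u (K x v w) := by
  intro x hx u v w
  -- nondegeneracy in subtraction form
  have hnd' : ∀ a b : EuclideanSpace ℝ (Fin n),
      (∀ z, D2 F Ω x a z = D2 F Ω x b z) → a = b := by
    intro a b h
    have hz : ∀ z, D2 F Ω x (a - b) z = 0 := by
      intro z
      have e1 : ![a - b, z] = Function.update ![a, z] 0 (a - b) := by
        funext i; fin_cases i <;> simp [Function.update]
      have e3 : Function.update ![a, z] 0 b = ![b, z] := by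
        funext i; fin_cases i <;> simp [Function.update]
      have hsub : D2 F Ω x (a - b) z = D2 F Ω x a z - D2 F Ω x b z := by
        unfold D2
        rw [e1, ContinuousMultilinearMap.map_update_sub, e3]
        congr 2
        funext i; fin_cases i <;> simp [Function.update]
      rw [hsub, h z, sub_self]
    have := hnd x hx (a - b) hz
    exact sub_eq_zero.mp this
  set a := K x u v with ha
  set b := K x v w with hb
  -- the defining identities hold at every point of Ω with the same `a`, `b`
  have hA : ∀ y ∈ Ω, iteratedFDerivWithin ℝ 2 F Ω y ![a, w]
      = -(1/2) * iteratedFDerivWithin ℝ 3 F Ω y ![u, v, w] := by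
    intro y hy
    have h := hK y hy u v w
    rw [show K y u v = a by rw [ha, hconst x hx y hy]] at h
    exact h
  have hB : ∀ y ∈ Ω, iteratedFDerivWithin ℝ 2 F Ω y ![b, u]
      = -(1/2) * iteratedFDerivWithin ℝ 3 F Ω y ![v, w, u] := by
    intro y hy
    have h := hK y hy v w u
    rw [show K y v w = b by rw [hb, hconst x hx y hy]] at h
    exact h
  -- differentiate them
  have hd1 : ∀ z, D3 F Ω x z a w
      = -(1/2) * iteratedFDerivWithin ℝ 4 F Ω x ![z, u, v, w] := by
    intro z
    exact aux_deriv hΩ hF (-(1/2)) ![a, w] ![u, v, w] hA hx z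
  have hd2 : ∀ z, D3 F Ω x z b u
      = -(1/2) * iteratedFDerivWithin ℝ 4 F Ω x ![z, v, w, u] := by
    intro z
    exact aux_deriv hΩ hF (-(1/2)) ![b, u] ![v, w, u] hB hx z
  -- fourth derivative cyclic symmetry in the last three slots
  have hQ : ∀ z, iteratedFDerivWithin ℝ 4 F Ω x ![z, v, w, u]
      = iteratedFDerivWithin ℝ 4 F Ω x ![z, u, v, w] := by
    intro z
    have h : ∀ y ∈ Ω, iteratedFDerivWithin ℝ 3 F Ω y ![v, w, u]
        = 1 * iteratedFDerivWithin ℝ 3 F Ω y ![u, v, w] := by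
      intro y hy
      rw [one_mul]
      exact (aux_sym3_rot hΩ hF hy u v w).symm
    have := aux_deriv hΩ hF (1:ℝ) ![v, w, u] ![u, v, w] h hx z
    rw [one_mul] at this
    exact this
  -- conclude
  apply hnd'
  intro z
  rw [hK x hx a w z, hK x hx u b z]
  have e1 : D3 F Ω x a w z = D3 F Ω x z a w := (aux_sym3_rot hΩ hF hx z a w).symm
  have e2 : D3 F Ω x u b z = D3 F Ω x z b u := by
    rw [aux_sym3_rot hΩ hF hx u b z, aux_sym3_01 hΩ hF hx b z u]
  rw [e1, e2, hd1 z, hd2 z, hQ z]
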